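/- arXiv:2312.06629 — 2 statements merged into one kernel-verified Lean document; each statement's English description precedes it below -/
import Mathlib

section
/- If p, p+k, p+2k, ..., p+(l-1)k is an arithmetic progression consisting of l prime numbers with common difference k, then k is divisible by every prime q < l (equivalently, k is a multiple of the product of all primes less than l). -/
/-!
If a prime `q < l` did not divide `k`, then `i ↦ p + i * k` would run through all residues
modulo `q` for `i < q`, so some term of the progression would be divisible by `q`, hence equal
to `q`, forcing `p ≤ q < l`. But the term `p + p * k = p * (1 + k)` is then composite.
-/

open Nat

theorem primorial_dvd_of_forall_prime_dvd {n k : ℕ}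
    (h : ∀ q : ℕ, q.Prime → q ≤ n → q ∣ k) : primorial n ∣ k :=
  Finset.prod_primes_dvd _ (fun q hq => (Finset.mem_filter.mp hq).2.prime) fun q hq => by
    rw [Finset.mem_filter, Finset.mem_range] at hq
    exact h q hq.2 (Nat.lt_succ_iff.mp hq.1)

theorem exists_lt_dvd_add_mul_of_coprime {q k : ℕ} [NeZero q] (hqk : Coprime k q) (p : ℕ) :
    ∃ i < q, q ∣ p + i * k := by
  refine ⟨(-(p : ZMod q) * (k : ZMod q)⁻¹).val, ZMod.val_lt _, ?_⟩
  rw [← ZMod.natCast_eq_zero_iff]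
  push_cast
  rw [ZMod.natCast_val, ZMod.cast_id, mul_assoc, mul_comm _ (k : ZMod q),
    ZMod.coe_mul_inv_eq_one k hqk]
  ring

theorem le_of_forall_prime_add_mul {p k l : ℕ} (hk : k ≠ 0)
    (hAP : ∀ i < l, (p + i * k).Prime) : l ≤ p := by
  by_contra! hpl
  have hp : p.Prime := by simpa using hAP 0 (by omega)
  have hcomposite : ¬ (p * (1 + k)).Prime := Nat.not_prime_mul hp.one_lt.ne' (by omega)
  exact hcomposite (by simpa [mul_add, mul_comm] using hAP p hpl)

theorem Nat.Prime.dvd_of_forall_prime_add_mul {p k l q : ℕ} (hq : q.Prime) (hql : q < l)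
    (hAP : ∀ i < l, (p + i * k).Prime) : q ∣ k := by
  by_contra hqk
  have : NeZero q := ⟨hq.ne_zero⟩
  obtain ⟨i, hiq, hdvd⟩ :=
    exists_lt_dvd_add_mul_of_coprime ((hq.coprime_iff_not_dvd.mpr hqk).symm) p
  have hterm : p + i * k = q :=
    ((prime_dvd_prime_iff_eq hq (hAP i (by omega))).mp hdvd).symm
  have hlp : l ≤ p := le_of_forall_prime_add_mul (by rintro rfl; simp at hqk) hAP
  omega

theorem primorial_divides_common_difference_general (p k l : ℕ)
    (hAP : ∀ i < l, Nat.Prime (p + i * k)) :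
    (∀ q : ℕ, q.Prime → q < l → q ∣ k) ∧ primorial (l - 1) ∣ k := by
  have hdvd : ∀ q : ℕ, q.Prime → q < l → q ∣ k := fun q hq hql =>
    hq.dvd_of_forall_prime_add_mul hql hAP
  refine ⟨hdvd, primorial_dvd_of_forall_prime_dvd fun q hq hql => hdvd q hq ?_⟩
  have := hq.two_le
  omega

theorem primorial_divides_common_difference (p k l : ℕ) (hp : p.Prime) (hk : 1 ≤ k)
    (hAP : ∀ i < l, Nat.Prime (p + i * k)) :
    (∀ q : ℕ, q.Prime → q < l → q ∣ k) ∧ primorial (l - 1) ∣ k :=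
  primorial_divides_common_difference_general p k l hAP
end

section
/- For every prime p and every positive integer k, the orbit sequence S(p,k) = (p, φ_k(p), φ_k²(p), ...) is eventually periodic: there exist m ≥ 0 and l ≥ 1 such that φ_k^{i+l}(p) = φ_k^i(p) for all i ≥ m. -/
/-- The largest prime factor of `n` (0 if `n` has no prime factor). -/
def maxPrimeFac (n : ℕ) : ℕ := n.primeFactors.sup id

/-- The map φ_k : x ↦ x + k if x is prime, else the largest prime factor of x. -/
def phi (k x : ℕ) : ℕ := if x.Prime then x + k else maxPrimeFac x

/-- A natural number is composite if it is at least 2 and not prime. -/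
def Composite (n : ℕ) : Prop := 2 ≤ n ∧ ¬ n.Prime

/-!
An orbit runs through blocks `q, q + k, q + 2k, …` of primes, each ended by a composite `x`
that is sent to its largest prime factor, which is at most `x / 2`. Fix a prime `s > k`.
Since `k` is invertible mod `s`, among `q + jk` with `s ≤ j < 2s` there is a multiple of `s`
exceeding `s`, so each block has fewer than `2s` terms. Hence if a block starts at a prime
`q ≤ M` with `M ≥ max p (2sk)`, all its terms are below `M + 2sk` and the next block starts at
a prime `≤ (M + 2sk) / 2 ≤ M`. The orbit is therefore bounded, and a bounded orbit is
eventually periodic by pigeonhole.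
-/

theorem Function.exists_iterate_add_eq_of_forall_mem {α : Type*} {f : α → α} {x : α}
    {t : Set α} (ht : t.Finite) (hx : ∀ n, f^[n] x ∈ t) :
    ∃ m l, 1 ≤ l ∧ ∀ i ≥ m, f^[i + l] x = f^[i] x := by
  obtain ⟨a, b, hab, heq⟩ := ht.exists_lt_map_eq_of_forall_mem hx
  have hper : IsPeriodicPt f (b - a) (f^[a] x) := by
    rw [IsPeriodicPt, IsFixedPt, ← iterate_add_apply, Nat.sub_add_cancel hab.le, heq]
  refine ⟨a, b - a, by omega, fun i hi => ?_⟩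
  obtain ⟨j, rfl⟩ := Nat.exists_eq_add_of_le hi
  rw [add_comm, iterate_add_apply, add_comm a j, iterate_add_apply]
  exact hper.apply_iterate j

lemma maxPrimeFac_mem_primeFactors {n : ℕ} (hn : 2 ≤ n) : maxPrimeFac n ∈ n.primeFactors := by
  obtain ⟨r, hr, hsup⟩ := Finset.exists_mem_eq_sup _ (Nat.nonempty_primeFactors.mpr hn) id
  rw [maxPrimeFac, hsup]
  exact hr

lemma maxPrimeFac_prime {n : ℕ} (hn : 2 ≤ n) : (maxPrimeFac n).Prime :=
  Nat.prime_of_mem_primeFactors (maxPrimeFac_mem_primeFactors hn)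

lemma two_mul_maxPrimeFac_le {n : ℕ} (hn : 2 ≤ n) (hnp : ¬ n.Prime) :
    2 * maxPrimeFac n ≤ n := by
  obtain ⟨m, hm⟩ := Nat.dvd_of_mem_primeFactors (maxPrimeFac_mem_primeFactors hn)
  have hm2 : 2 ≤ m := by
    by_contra! h
    interval_cases m
    · rw [mul_zero] at hm; omega
    · exact hnp (by rw [hm, mul_one]; exact maxPrimeFac_prime hn)
  calc 2 * maxPrimeFac n ≤ maxPrimeFac n * m := by rw [mul_comm]; exact Nat.mul_le_mul_left _ hm2
    _ = n := hm.symm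

lemma exists_dvd_add_mul_of_not_dvd {s k : ℕ} (hs : s.Prime) (hsk : ¬ s ∣ k) (q a : ℕ) :
    ∃ j, a ≤ j ∧ j < a + s ∧ s ∣ q + j * k := by
  have := Fact.mk hs
  have hk : (k : ZMod s) ≠ 0 := by rwa [Ne, ZMod.natCast_eq_zero_iff]
  -- `j = a + t.val` solves `q + j * k ≡ 0 [MOD s]`
  set t : ZMod s := -q * (k : ZMod s)⁻¹ - a
  refine ⟨a + t.val, by omega, by have := ZMod.val_lt t; omega, ?_⟩
  rw [← ZMod.natCast_eq_zero_iff]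
  push_cast
  rw [ZMod.natCast_zmod_val]
  linear_combination -(q : ZMod s) * mul_inv_cancel₀ hk

lemma lt_two_mul_of_forall_prime_add_mul {s k q j : ℕ} (hs : s.Prime) (hsk : ¬ s ∣ k)
    (hq : q ≠ 0) (hrun : ∀ i < j, (q + i * k).Prime) : j < 2 * s := by
  obtain ⟨i, hsi, his, hdvd⟩ := exists_dvd_add_mul_of_not_dvd hs hsk q s
  have hk : 0 < k := Nat.pos_of_ne_zero (by rintro rfl; exact hsk (dvd_zero s))
  have hlt : s < q + i * k := by
    have := hsi.trans (Nat.le_mul_of_pos_right i hk)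
    omega
  by_contra! hj
  rcases (hrun i (by omega)).eq_one_or_self_of_dvd s hdvd with h | h
  · exact hs.one_lt.ne' h
  · omega

def OnPrimeRun (k M x : ℕ) : Prop :=
  ∃ q j, q.Prime ∧ q ≤ M ∧ (∀ i < j, (q + i * k).Prime) ∧ x = q + j * k

lemma OnPrimeRun.lt_add_two_mul_mul {s k M x : ℕ} (hs : s.Prime) (hsk : ¬ s ∣ k)
    (h : OnPrimeRun k M x) : x < M + 2 * s * k := by
  obtain ⟨q, j, hq, hqM, hrun, rfl⟩ := h
  have hj := lt_two_mul_of_forall_prime_add_mul hs hsk hq.ne_zero hrun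
  have hk : 0 < k := Nat.pos_of_ne_zero (by rintro rfl; exact hsk (dvd_zero s))
  have := Nat.mul_lt_mul_of_pos_right hj hk
  omega

lemma mapsTo_phi_onPrimeRun {s k M : ℕ} (hs : s.Prime) (hsk : ¬ s ∣ k) (hM : 2 * s * k ≤ M) :
    Set.MapsTo (phi k) {x | OnPrimeRun k M x} {x | OnPrimeRun k M x} := by
  rintro x ⟨q, j, hq, hqM, hrun, rfl⟩
  by_cases hx : (q + j * k).Prime
  · refine ⟨q, j + 1, hq, hqM, fun i hi => ?_, by rw [phi, if_pos hx]; ring⟩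
    rcases Nat.lt_succ_iff_lt_or_eq.mp hi with hi | rfl
    exacts [hrun i hi, hx]
  · have hx2 : 2 ≤ q + j * k := hq.two_le.trans (Nat.le_add_right _ _)
    have hlt := OnPrimeRun.lt_add_two_mul_mul hs hsk ⟨q, j, hq, hqM, hrun, rfl⟩
    have hhalf := two_mul_maxPrimeFac_le hx2 hx
    exact ⟨maxPrimeFac (q + j * k), 0, maxPrimeFac_prime hx2, by omega, by simp,
      by simp [phi, hx]⟩

theorem orbit_eventually_periodic (p k : ℕ) (hp : p.Prime) (hk : 1 ≤ k) :
    ∃ (m l : ℕ), 1 ≤ l ∧ ∀ i ≥ m, (phi k)^[i + l] p = (phi k)^[i] p := by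
  obtain ⟨s, hks, hs⟩ := Nat.exists_infinite_primes (k + 1)
  have hsk : ¬ s ∣ k := fun h => by have := Nat.le_of_dvd hk h; omega
  set M := max p (2 * s * k)
  have hp_run : OnPrimeRun k M p := ⟨p, 0, hp, le_max_left _ _, by simp, by simp⟩
  have hmaps := mapsTo_phi_onPrimeRun hs hsk (le_max_right p (2 * s * k))
  exact Function.exists_iterate_add_eq_of_forall_mem (Set.finite_Iio (M + 2 * s * k))
    fun n => (hmaps.iterate n hp_run).lt_add_two_mul_mul hs hsk
end
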